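/- Let S be a multiset of m i.i.d. uniform samples from a nonempty finite set P ⊆ R^d. Then for any 0 < γ, δ ≤ 1 with m ≥ 1/(γδ), with probability at least 1 - δ, Σ_{p∈P} ||p - Γ(S)||^2 ≤ (1 + γ) · Δ_1(P). (This is the (f, γ, δ)-sampling property of squared Euclidean distance with f(γ,δ) = 1/(γδ).) -/

import Mathlib

open scoped Classical

/-!
For a center `c`, the cost splits as `∑ ‖p - c‖² = Δ + |P| ‖μ - c‖²` with `μ` the centroid of `P`
and `Δ = ∑ ‖p - μ‖²`; in particular `Δ₁(P) = Δ`. For `m` independent uniform samples the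
deviations `sᵢ - μ` are centered, so the cross terms of `‖∑ᵢ (sᵢ - μ)‖²` average out and the
sample mean satisfies `E[|P| ‖μ - Γ(S)‖²] = Δ / m`. By Markov's inequality the excess cost
exceeds `γ Δ` with probability at most `1 / (γ m) ≤ δ`.
-/

open Finset

section Tuples

variable {α : Type*} [Fintype α]

lemma Fintype.sum_fin_succ_pi {M : Type*} [AddCommMonoid M] (m : ℕ)
    (F : (Fin (m + 1) → α) → M) :
    ∑ s, F s = ∑ a, ∑ t : Fin m → α, F (Fin.cons a t) := by
  rw [← (Fin.consEquiv fun _ => α).sum_comp, Fintype.sum_prod_type]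
  rfl

variable {E : Type*} [NormedAddCommGroup E] [InnerProductSpace ℝ E]

lemma card_mul_sum_pi_norm_sum_comp_sq {v : α → E} (hv : ∑ a, v a = 0) (m : ℕ) :
    Fintype.card α * ∑ s : Fin m → α, ‖∑ i, v (s i)‖ ^ 2 =
      m * Fintype.card α ^ m * ∑ a, ‖v a‖ ^ 2 := by
  induction m with
  | zero => simp
  | succ m ih =>
    have cross : ∑ a, ∑ t : Fin m → α, inner ℝ (v a) (∑ i, v (t i)) = 0 := by
      rw [sum_comm]
      simp only [← sum_inner, hv, inner_zero_left, sum_const_zero]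
    simp only [Fintype.sum_fin_succ_pi, Fin.sum_univ_succ, Fin.cons_zero, Fin.cons_succ,
      norm_add_sq_real, sum_add_distrib, sum_const, card_univ, Fintype.card_fun,
      Fintype.card_fin, nsmul_eq_mul, ← mul_sum]
    push_cast
    linear_combination (Fintype.card α : ℝ) * ih + 2 * (Fintype.card α : ℝ) * cross

end Tuples

section Centroid

variable {E : Type*} [NormedAddCommGroup E] [InnerProductSpace ℝ E]

lemma sum_sub_inv_card_smul_sum_eq_zero {P : Finset E} (hP : P.Nonempty) :
    ∑ p ∈ P, (p - (#P : ℝ)⁻¹ • ∑ q ∈ P, q) = 0 := by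
  rw [sum_sub_distrib, sum_const, ← Nat.cast_smul_eq_nsmul ℝ,
    smul_inv_smul₀ (by simp [hP.ne_empty]), sub_self]

variable {P : Finset E} {μ : E}

lemma sum_norm_sub_sq_eq_add (hμ : ∑ p ∈ P, (p - μ) = 0) (c : E) :
    ∑ p ∈ P, ‖p - c‖ ^ 2 = ∑ p ∈ P, ‖p - μ‖ ^ 2 + #P * ‖μ - c‖ ^ 2 := by
  have expand (p : E) :
      ‖p - c‖ ^ 2 = ‖p - μ‖ ^ 2 + 2 * inner ℝ (p - μ) (μ - c) + ‖μ - c‖ ^ 2 := by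
    rw [← norm_add_sq_real, sub_add_sub_cancel]
  rw [sum_congr rfl fun p _ => expand p]
  simp only [sum_add_distrib, ← mul_sum, ← sum_inner, hμ, inner_zero_left, sum_const,
    nsmul_eq_mul]
  ring

lemma iInf_sum_norm_sub_sq_eq (hμ : ∑ p ∈ P, (p - μ) = 0) :
    ⨅ c, ∑ p ∈ P, ‖p - c‖ ^ 2 = ∑ p ∈ P, ‖p - μ‖ ^ 2 := by
  have le_cost (c : E) : ∑ p ∈ P, ‖p - μ‖ ^ 2 ≤ ∑ p ∈ P, ‖p - c‖ ^ 2 := by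
    rw [sum_norm_sub_sq_eq_add hμ c]
    exact le_add_of_nonneg_right (by positivity)
  exact le_antisymm (ciInf_le ⟨_, Set.forall_mem_range.2 le_cost⟩ μ) (le_ciInf le_cost)

noncomputable def sampleMean {m : ℕ} (s : Fin m → E) : E := (m : ℝ)⁻¹ • ∑ i, s i

lemma mul_sum_pi_card_mul_norm_sub_sampleMean_sq (hμ : ∑ p ∈ P, (p - μ) = 0) {m : ℕ}
    (hm : m ≠ 0) :
    m * ∑ s : Fin m → P, #P * ‖μ - sampleMean (Subtype.val ∘ s)‖ ^ 2 =
      #P ^ m * ∑ p ∈ P, ‖p - μ‖ ^ 2 := by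
  set v : P → E := fun p => p - μ
  have hv : ∑ p, v p = 0 := by rwa [sum_coe_sort P fun p => p - μ]
  have hm' : (m : ℝ) ≠ 0 := Nat.cast_ne_zero.2 hm
  have deviation (s : Fin m → P) :
      μ - sampleMean (Subtype.val ∘ s) = -((m : ℝ)⁻¹ • ∑ i, v (s i)) := by
    simp only [v, sampleMean, Function.comp_apply, sum_sub_distrib, sum_const, card_univ,
      Fintype.card_fin, smul_sub, ← Nat.cast_smul_eq_nsmul ℝ, inv_smul_smul₀ hm', neg_sub]
  have second_moment := card_mul_sum_pi_norm_sum_comp_sq hv m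
  rw [Fintype.card_coe, sum_coe_sort P fun p => ‖p - μ‖ ^ 2] at second_moment
  simp only [deviation, norm_neg, norm_smul, mul_pow, ← mul_sum, norm_inv, RCLike.norm_natCast]
  field_simp
  linear_combination second_moment

end Centroid

section Markov

variable {ι : Type*} {s : Finset ι} {f : ι → ℝ}

lemma card_filter_lt_mul_le_sum (hf : ∀ i ∈ s, 0 ≤ f i) (t : ℝ) :
    #{i ∈ s | t < f i} * t ≤ ∑ i ∈ s, f i :=
  calc #{i ∈ s | t < f i} * t
      ≤ ∑ i ∈ s with t < f i, f i := by
        rw [← nsmul_eq_mul]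
        exact card_nsmul_le_sum _ _ _ fun i hi => (mem_filter.1 hi).2.le
    _ ≤ ∑ i ∈ s, f i := sum_le_sum_of_subset_of_nonneg (filter_subset _ _) fun i hi _ => hf i hi

lemma card_filter_lt_le_of_sum_le_mul (hf : ∀ i ∈ s, 0 ≤ f i) {t K : ℝ} (ht : 0 ≤ t)
    (hK : 0 ≤ K) (hsum : ∑ i ∈ s, f i ≤ K * t) :
    #{i ∈ s | t < f i} ≤ K := by
  rcases ht.eq_or_lt with rfl | ht
  · have : {i ∈ s | 0 < f i} = ∅ := filter_eq_empty_iff.2 fun i hi =>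
      not_lt.2 ((single_le_sum hf hi).trans (by simpa using hsum))
    simp [this, hK]
  · exact le_of_mul_le_mul_right ((card_filter_lt_mul_le_sum hf t).trans hsum) ht

end Markov

theorem sampling_property_general {d : ℕ} (P : Finset (EuclideanSpace ℝ (Fin d)))
    (hP : P.Nonempty) (γ δ : ℝ) (hγ0 : 0 < γ) (hδ0 : 0 < δ)
    (m : ℕ) (hm : 1 / (γ * δ) ≤ (m : ℝ)) :
    (1 - δ) * (P.card : ℝ) ^ m ≤
      ((Finset.univ.filter fun s : Fin m → {x // x ∈ P} =>
        ∑ p ∈ P, ‖p - ((m : ℝ)⁻¹ • ∑ i, ((s i : EuclideanSpace ℝ (Fin d))))‖ ^ 2 ≤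
          (1 + γ) * ⨅ c : EuclideanSpace ℝ (Fin d), ∑ p ∈ P, ‖p - c‖ ^ 2).card : ℝ) := by
  set μ := (#P : ℝ)⁻¹ • ∑ q ∈ P, q
  have hμ : ∑ p ∈ P, (p - μ) = 0 := sum_sub_inv_card_smul_sum_eq_zero hP
  rw [iInf_sum_norm_sub_sq_eq hμ]
  set Δ := ∑ p ∈ P, ‖p - μ‖ ^ 2
  set cost : (Fin m → P) → ℝ := fun s => ∑ p ∈ P, ‖p - sampleMean (Subtype.val ∘ s)‖ ^ 2
  show (1 - δ) * _ ≤ (#{s | cost s ≤ (1 + γ) * Δ} : ℝ)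
  have hγδm : 1 ≤ γ * δ * m := by rwa [div_le_iff₀ (by positivity), mul_comm] at hm
  have hm0 : m ≠ 0 := by rintro rfl; norm_num at hγδm
  set excess : (Fin m → P) → ℝ := fun s => #P * ‖μ - sampleMean (Subtype.val ∘ s)‖ ^ 2
  have cost_eq (s : Fin m → P) : cost s = Δ + excess s := sum_norm_sub_sq_eq_add hμ _
  have sum_excess : ∑ s, excess s ≤ δ * #P ^ m * (γ * Δ) := by
    refine le_of_mul_le_mul_left ?_ (by positivity : (0 : ℝ) < m)
    calc (m : ℝ) * ∑ s, excess s = 1 * (#P ^ m * Δ) := by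
          rw [one_mul]; exact mul_sum_pi_card_mul_norm_sub_sampleMean_sq hμ hm0
      _ ≤ γ * δ * m * (#P ^ m * Δ) := by gcongr
      _ = m * (δ * #P ^ m * (γ * Δ)) := by ring
  have bad : #{s | ¬cost s ≤ (1 + γ) * Δ} ≤ δ * #P ^ m := by
    simp only [cost_eq, not_le, add_mul, one_mul, add_lt_add_iff_left]
    exact card_filter_lt_le_of_sum_le_mul (fun s _ => by positivity) (by positivity)
      (by positivity) sum_excess
  have split : (#{s | cost s ≤ (1 + γ) * Δ} : ℝ) + #{s | ¬cost s ≤ (1 + γ) * Δ} = #P ^ m := by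
    exact_mod_cast (card_filter_add_card_filter_not (s := univ) _).trans (by simp)
  linarith

/-- The `(f, γ, δ)`-sampling property of squared Euclidean distance with `f(γ,δ) = 1/(γδ)`:
for `m ≥ 1/(γδ)` i.i.d. uniform samples from `P`, with probability at least `1 - δ`
(i.e. for at least a `(1-δ)` fraction of all `m`-tuples from `P`), the 1-means cost of the
sample mean is at most `(1 + γ) · Δ₁(P)`, where `Δ₁(P) = min_c ∑_{p∈P} ‖p - c‖²`. -/
theorem sampling_property {d : ℕ} (P : Finset (EuclideanSpace ℝ (Fin d)))
    (hP : P.Nonempty) (γ δ : ℝ) (hγ0 : 0 < γ) (hγ1 : γ ≤ 1) (hδ0 : 0 < δ) (hδ1 : δ ≤ 1)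
    (m : ℕ) (hm : 1 / (γ * δ) ≤ (m : ℝ)) :
    (1 - δ) * (P.card : ℝ) ^ m ≤
      ((Finset.univ.filter fun s : Fin m → {x // x ∈ P} =>
        ∑ p ∈ P, ‖p - ((m : ℝ)⁻¹ • ∑ i, ((s i : EuclideanSpace ℝ (Fin d))))‖ ^ 2 ≤
          (1 + γ) * ⨅ c : EuclideanSpace ℝ (Fin d), ∑ p ∈ P, ‖p - c‖ ^ 2).card : ℝ) :=
  sampling_property_general P hP γ δ hγ0 hδ0 m hm
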